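/- arXiv:2604.15135 — 4 statements merged into one kernel-verified Lean document; each statement's English description precedes it below -/
import Mathlib

section
/- Let z_0,...,z_n be distinct points on the unit circle with Lagrange basis polynomials L_k. Then max_{0≤k≤n} (1/(2π)) ∫_0^{2π} |L_k(e^{iθ})|² dθ ≤ ‖V(z_0,...,z_n)^{-1}‖₂² ≤ Σ_{k=0}^n (1/(2π)) ∫_0^{2π} |L_k(e^{iθ})|² dθ. -/
/-!
Since `L_k(z_m) = δ_{km}`, the `k`-th row of the inverse of `V = (z_m^j)` lists the coefficients
of `L_k`. By Parseval's identity for polynomials on the unit circle, `(1/2π) ∫ |L_k(e^{iθ})|² dθ`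
is therefore the squared Euclidean norm of that row. The spectral norm of a matrix dominates the
norm of each of its rows and is dominated by its Frobenius norm.
-/

open Polynomial

theorem Polynomial.circleAverage_norm_sq_eval_eq_sum_range {p : ℂ[X]} {N : ℕ}
    (hp : p.natDegree < N) :
    Real.circleAverage (fun w ↦ ‖p.eval w‖ ^ 2) 0 1 = ∑ i ∈ Finset.range N, ‖p.coeff i‖ ^ 2 := by
  rw [← p.sum_sq_norm_coeff_eq_circleAverage,
    ← p.sum_over_range' (f := fun _ c ↦ ‖c‖ ^ 2) (by simp) N hp, Polynomial.sum_def]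

namespace Lagrange

variable {F ι : Type*} [Field F] [DecidableEq ι]

theorem eval_basis (s : Finset ι) (v : ι → F) (i : ι) (x : F) :
    (Lagrange.basis s v i).eval x = ∏ j ∈ s.erase i, (x - v j) / (v i - v j) := by
  simp [Lagrange.basis, basisDivisor, eval_prod, div_eq_inv_mul]

theorem natDegree_basis_lt {s : Finset ι} {v : ι → F} (hvs : Set.InjOn v s) {i : ι} (hi : i ∈ s) :
    (Lagrange.basis s v i).natDegree < s.card := by
  rw [natDegree_basis hvs hi]
  exact Nat.sub_lt (Finset.card_pos.2 ⟨i, hi⟩) one_pos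

end Lagrange

theorem Matrix.inv_vandermonde_apply {F : Type*} [Field F] {N : ℕ} {v : Fin N → F}
    (hv : Function.Injective v) (j k : Fin N) :
    (vandermonde v)⁻¹ j k = (Lagrange.basis Finset.univ v k).coeff j := by
  suffices vandermonde v * Matrix.of (fun (j k : Fin N) ↦ (Lagrange.basis Finset.univ v k).coeff j)
      = 1 by
    rw [inv_eq_right_inv this, of_apply]
  ext i k
  have hdeg : (Lagrange.basis Finset.univ v k).natDegree < N := by
    simpa using Lagrange.natDegree_basis_lt hv.injOn (Finset.mem_univ k)
  rw [mul_apply, one_apply]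
  simp only [vandermonde_apply, of_apply]
  rw [Fin.sum_univ_eq_sum_range (fun j ↦ v i ^ j * (Lagrange.basis Finset.univ v k).coeff j),
    Finset.sum_congr rfl fun j _ ↦ mul_comm _ _, ← eval_eq_sum_range' hdeg]
  by_cases hik : i = k
  · subst hik
    simp [Lagrange.eval_basis_self hv.injOn (Finset.mem_univ i)]
  · simp [Lagrange.eval_basis_of_ne (Ne.symm hik) (Finset.mem_univ i), hik]

theorem Lagrange.circleAverage_norm_sq_eval_basis {N : ℕ} {v : Fin N → ℂ}
    (hv : Function.Injective v) (k : Fin N) :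
    Real.circleAverage (fun w ↦ ‖(Lagrange.basis Finset.univ v k).eval w‖ ^ 2) 0 1
      = ∑ j, ‖(Matrix.vandermonde v)⁻¹ j k‖ ^ 2 := by
  have hdeg : (Lagrange.basis Finset.univ v k).natDegree < N := by
    simpa using natDegree_basis_lt hv.injOn (Finset.mem_univ k)
  simp only [circleAverage_norm_sq_eval_eq_sum_range hdeg, Matrix.inv_vandermonde_apply hv]
  exact (Fin.sum_univ_eq_sum_range (fun j ↦ ‖(Lagrange.basis Finset.univ v k).coeff j‖ ^ 2) N).symm

namespace Matrix

open scoped Matrix.Norms.L2Operator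

variable {𝕜 m n : Type*} [RCLike 𝕜] [Fintype m] [Fintype n] [DecidableEq n]

theorem sum_norm_sq_row_le_l2_opNorm_sq [DecidableEq m] (A : Matrix m n 𝕜) (i : m) :
    ∑ j, ‖A i j‖ ^ 2 ≤ ‖A‖ ^ 2 := by
  have h := l2_opNorm_mulVec Aᴴ (EuclideanSpace.single i 1)
  rw [l2_opNorm_conjTranspose, PiLp.norm_single, norm_one, mul_one] at h
  calc ∑ j, ‖A i j‖ ^ 2
      = ‖(EuclideanSpace.equiv n 𝕜).symm (Aᴴ *ᵥ EuclideanSpace.single i 1)‖ ^ 2 := by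
        rw [EuclideanSpace.norm_sq_eq]
        simp [mulVec_single]
    _ ≤ ‖A‖ ^ 2 := by gcongr

theorem l2_opNorm_sq_le_sum_norm_sq (A : Matrix m n 𝕜) :
    ‖A‖ ^ 2 ≤ ∑ i, ∑ j, ‖A i j‖ ^ 2 := by
  set S := ∑ i, ∑ j, ‖A i j‖ ^ 2
  have hS : 0 ≤ S := by positivity
  suffices ‖A‖ ≤ √S by simpa [Real.sq_sqrt hS] using pow_le_pow_left₀ (norm_nonneg _) this 2
  rw [l2_opNorm_def]
  refine ContinuousLinearMap.opNorm_le_bound _ (Real.sqrt_nonneg _) fun x ↦ ?_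
  have hrow (i : m) : ‖(A *ᵥ x) i‖ ^ 2 ≤ (∑ j, ‖A i j‖ ^ 2) * ‖x‖ ^ 2 := calc
    ‖(A *ᵥ x) i‖ ^ 2 ≤ (∑ j, ‖A i j‖ * ‖x j‖) ^ 2 := by
      gcongr
      exact (norm_sum_le _ _).trans_eq (by simp [norm_mul])
    _ ≤ (∑ j, ‖A i j‖ ^ 2) * ∑ j, ‖x j‖ ^ 2 := Finset.sum_mul_sq_le_sq_mul_sq _ _ _
    _ = (∑ j, ‖A i j‖ ^ 2) * ‖x‖ ^ 2 := by rw [EuclideanSpace.norm_sq_eq]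
  rw [← Real.sqrt_sq (norm_nonneg _), ← Real.sqrt_sq (norm_nonneg x), ← Real.sqrt_mul hS]
  gcongr
  rw [EuclideanSpace.norm_sq_eq, Finset.sum_mul]
  exact Finset.sum_le_sum fun i _ ↦ hrow i

end Matrix

open Complex Matrix Real

theorem stmt3_general (n : ℕ) (z : Fin (n + 1) → ℂ)
    (hinj : Function.Injective z) :
    (∀ k : Fin (n + 1),
      (1 / (2 * π)) * (∫ θ in (0:ℝ)..(2 * π),
          ‖∏ j ∈ Finset.univ.erase k,
            ((Complex.exp (θ * Complex.I) - z j) / (z k - z j))‖ ^ 2)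
        ≤ ‖Matrix.toEuclideanCLM (𝕜 := ℂ)
            ((Matrix.of fun j m : Fin (n + 1) => z m ^ (j : ℕ))⁻¹)‖ ^ 2) ∧
    ‖Matrix.toEuclideanCLM (𝕜 := ℂ)
        ((Matrix.of fun j m : Fin (n + 1) => z m ^ (j : ℕ))⁻¹)‖ ^ 2
      ≤ ∑ k : Fin (n + 1),
          (1 / (2 * π)) * (∫ θ in (0:ℝ)..(2 * π),
            ‖∏ j ∈ Finset.univ.erase k,
              ((Complex.exp (θ * Complex.I) - z j) / (z k - z j))‖ ^ 2) := by
  have hrow (k : Fin (n + 1)) :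
      (1 / (2 * π)) * (∫ θ in (0:ℝ)..(2 * π),
          ‖∏ j ∈ Finset.univ.erase k, ((Complex.exp (θ * Complex.I) - z j) / (z k - z j))‖ ^ 2)
        = ∑ j, ‖(Matrix.of fun j m : Fin (n + 1) => z m ^ (j : ℕ))⁻¹ k j‖ ^ 2 := by
    rw [show (Matrix.of fun j m : Fin (n + 1) => z m ^ (j : ℕ)) = (vandermonde z)ᵀ from rfl,
      ← transpose_nonsing_inv]
    simp only [transpose_apply]
    rw [← Lagrange.circleAverage_norm_sq_eval_basis hinj k, circleAverage_def]
    simp [Lagrange.eval_basis, circleMap]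
  simp only [hrow]
  exact ⟨fun k ↦ sum_norm_sq_row_le_l2_opNorm_sq _ k, l2_opNorm_sq_le_sum_norm_sq _⟩

/-- For distinct unit-circle nodes, with Lagrange basis polynomials `L k`,
`max_k (1/2π)∫|L k|² ≤ ‖V⁻¹‖₂² ≤ Σ_k (1/2π)∫|L k|²`. -/
theorem stmt3 (n : ℕ) (z : Fin (n + 1) → ℂ)
    (hz : ∀ j, ‖z j‖ = 1) (hinj : Function.Injective z) :
    (∀ k : Fin (n + 1),
      (1 / (2 * π)) * (∫ θ in (0:ℝ)..(2 * π),
          ‖∏ j ∈ Finset.univ.erase k,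
            ((Complex.exp (θ * Complex.I) - z j) / (z k - z j))‖ ^ 2)
        ≤ ‖Matrix.toEuclideanCLM (𝕜 := ℂ)
            ((Matrix.of fun j m : Fin (n + 1) => z m ^ (j : ℕ))⁻¹)‖ ^ 2) ∧
    ‖Matrix.toEuclideanCLM (𝕜 := ℂ)
        ((Matrix.of fun j m : Fin (n + 1) => z m ^ (j : ℕ))⁻¹)‖ ^ 2
      ≤ ∑ k : Fin (n + 1),
          (1 / (2 * π)) * (∫ θ in (0:ℝ)..(2 * π),
            ‖∏ j ∈ Finset.univ.erase k,
              ((Complex.exp (θ * Complex.I) - z j) / (z k - z j))‖ ^ 2) :=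
  stmt3_general n z hinj
end

section
/- Let z_0,...,z_n be points on the unit circle with pairwise arc-length distance at least ε, where (n+1)ε ≤ 2π. Then |det V(z_0,...,z_n)| ≥ |det V(1, e^{iε}, e^{2iε}, ..., e^{inε})|, i.e., equispaced nodes with gap exactly ε minimize the Vandermonde determinant modulus. -/
/-!
Write `|det V(z)|² = ∏_{m=1}^{n} P_m(z)` with the cyclic chord products
`P_m(z) = ∏_i |z_{i+m} - z_i|`, indices taken mod `n + 1`. Sort the nodes by argument and lift
the arguments to a sequence `φ` on `ℕ` with `φ (k + n + 1) = φ k + 2π` and all gaps `≥ ε`. Then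
`P_m(z) = ∏_i 2 sin x_i` with `x_i = (φ (i + m) - φ i) / 2 ∈ [mε/2, π - (n+1-m)ε/2]` and
`∑ x_i = mπ`. As `sin` is concave and positive on that interval, weighted AM-GM shows that such a
product is smallest when every `x_i` sits at an endpoint, in the proportion forced by the sum,
and this is exactly `P_m` of the equispaced nodes.
-/

open Complex Matrix Real Finset Set

lemma ConcaveOn.rpow_mul_rpow_le {f : ℝ → ℝ} {A B t : ℝ} (hf : ConcaveOn ℝ (Icc A B) f)
    (hA : 0 ≤ f A) (hB : 0 ≤ f B) (hAB : A ≤ B) (ht₀ : 0 ≤ t) (ht₁ : t ≤ 1) :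
    f A ^ (1 - t) * f B ^ t ≤ f ((1 - t) * A + t * B) :=
  (geom_mean_le_arith_mean2_weighted (by linarith) ht₀ hA hB (by ring)).trans
    (hf.2 (left_mem_Icc.2 hAB) (right_mem_Icc.2 hAB) (by linarith) ht₀ (by ring))

lemma ConcaveOn.pow_mul_pow_le_prod {ι : Type*} {s : Finset ι} {f : ℝ → ℝ} {x : ι → ℝ}
    {A B : ℝ} {k m : ℕ} (hf : ConcaveOn ℝ (Icc A B) f) (hA : 0 ≤ f A) (hB : 0 ≤ f B)
    (hx : ∀ i ∈ s, x i ∈ Icc A B) (hcard : #s = k + m) (hsum : ∑ i ∈ s, x i = k * A + m * B) :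
    f A ^ k * f B ^ m ≤ ∏ i ∈ s, f (x i) := by
  rcases s.eq_empty_or_nonempty with rfl | ⟨i₀, hi₀⟩
  · obtain ⟨rfl, rfl⟩ : k = 0 ∧ m = 0 := by simpa [eq_comm] using hcard
    simp
  rcases ((hx i₀ hi₀).1.trans (hx i₀ hi₀).2).eq_or_lt with rfl | hAB
  · rw [prod_congr rfl fun i hi => by rw [(Icc_self A ▸ hx i hi :)], prod_const, hcard, pow_add]
  set t : ι → ℝ := fun i => (x i - A) / (B - A)
  have hBA : 0 < B - A := sub_pos.2 hAB
  have hxt : ∀ i, x i = (1 - t i) * A + t i * B := fun i => by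
    simp only [t]; field_simp; ring
  have ht : ∀ i ∈ s, 0 ≤ t i ∧ t i ≤ 1 := fun i hi => by
    have := hx i hi
    exact ⟨div_nonneg (by linarith [this.1]) hBA.le, (div_le_one hBA).2 (by linarith [this.2])⟩
  have hsum_t : ∑ i ∈ s, t i = m := by
    rw [← sum_div, sum_sub_distrib, hsum, sum_const, hcard, div_eq_iff hBA.ne']
    ring
  have hsum_one_sub_t : ∑ i ∈ s, (1 - t i) = k := by
    rw [sum_sub_distrib, hsum_t, sum_const, hcard]; ring
  calc f A ^ k * f B ^ m = ∏ i ∈ s, f A ^ (1 - t i) * f B ^ t i := by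
        rw [prod_mul_distrib, ← rpow_sum_of_nonneg hA fun i hi => by linarith [(ht i hi).2],
          ← rpow_sum_of_nonneg hB fun i hi => (ht i hi).1, hsum_t, hsum_one_sub_t,
          rpow_natCast, rpow_natCast]
    _ ≤ ∏ i ∈ s, f (x i) := prod_le_prod (fun i _ => by positivity) fun i hi => by
        rw [hxt i]; exact hf.rpow_mul_rpow_le hA hB hAB.le (ht i hi).1 (ht i hi).2

section GapSequence

variable {φ : ℕ → ℝ} {ε : ℝ}

lemma mul_le_sub_of_le_succ_sub (hgap : ∀ k, ε ≤ φ (k + 1) - φ k) (k j : ℕ) :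
    j * ε ≤ φ (k + j) - φ k := by
  induction j with
  | zero => simp
  | succ j ih => rw [Nat.cast_succ, ← add_assoc]; linarith [hgap (k + j)]

lemma mul_le_of_le_succ_sub_of_add_period {N : ℕ} {c : ℝ} (hgap : ∀ k, ε ≤ φ (k + 1) - φ k)
    (hper : ∀ k, φ (k + N) = φ k + c) : N * ε ≤ c := by
  have h := mul_le_sub_of_le_succ_sub hgap 0 N
  rwa [hper, add_sub_cancel_left] at h

lemma sum_range_sub_of_add_period {N : ℕ} {c : ℝ} (hper : ∀ k, φ (k + N) = φ k + c) (m : ℕ) :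
    ∑ i ∈ range N, (φ (i + m) - φ i) = m * c := by
  induction m generalizing φ with
  | zero => simp
  | succ m ih =>
    have hshift := ih (φ := fun k => φ (k + 1)) fun k => by
      simpa [add_right_comm] using hper (k + 1)
    have hsplit : ∑ i ∈ range N, (φ (i + (m + 1)) - φ i)
        = ∑ i ∈ range N, (φ (i + m + 1) - φ (i + 1)) + ∑ i ∈ range N, (φ (i + 1) - φ i) := by
      rw [← sum_add_distrib]
      exact sum_congr rfl fun i _ => by rw [add_assoc]; ring
    rw [hsplit, hshift, sum_range_sub, ← zero_add N, hper 0]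
    push_cast; ring

end GapSequence

lemma norm_exp_mul_I_sub_exp_mul_I (a b : ℝ) :
    ‖exp (a * I) - exp (b * I)‖ = 2 * |Real.sin ((a - b) / 2)| := by
  have h : exp (a * I) - exp (b * I) = exp (b * I) * (exp (I * ↑(a - b)) - 1) := by
    rw [mul_sub, ← Complex.exp_add, mul_one]; congr 2; push_cast; ring
  rw [h, norm_mul, norm_exp_ofReal_mul_I, one_mul, norm_exp_I_mul_ofReal_sub_one, norm_mul,
    Real.norm_eq_abs, Real.norm_eq_abs, abs_two]

lemma exp_arg_mul_I_of_norm_eq_one {a : ℂ} (ha : ‖a‖ = 1) : exp (arg a * I) = a := by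
  simpa [ha] using norm_mul_exp_arg_mul_I a

lemma arg_exp_mul_I_of_mem_Ioc {θ : ℝ} (hθ : θ ∈ Ioc (-π) π) : arg (exp (θ * I)) = θ := by
  rw [exp_mul_I, arg_cos_add_sin_mul_I hθ]

lemma le_sub_arg_of_le_abs_arg_div {a b : ℂ} {ε : ℝ} (ha : ‖a‖ = 1) (hb : ‖b‖ = 1)
    (hab : arg b ≤ arg a) (h : ε ≤ |arg (a / b)|) :
    ε ≤ arg a - arg b ∧ ε ≤ 2 * π - (arg a - arg b) := by
  have hdiv (c : ℕ) : a / b = exp (↑(arg a - arg b - c * (2 * π)) * I) := by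
    conv_lhs => rw [← exp_arg_mul_I_of_norm_eq_one ha, ← exp_arg_mul_I_of_norm_eq_one hb]
    push_cast
    rw [sub_mul, Complex.exp_sub, mul_assoc, exp_nat_mul_two_pi_mul_I, div_one, sub_mul,
      Complex.exp_sub]
  have hεπ : ε ≤ π := h.trans (abs_arg_le_pi _)
  have := arg_le_pi a
  have := neg_pi_lt_arg b
  rcases le_or_gt (arg a - arg b) π with hdπ | hdπ
  · rw [hdiv 0, arg_exp_mul_I_of_mem_Ioc ⟨by simp; linarith, by simpa using hdπ⟩,
      Nat.cast_zero, zero_mul, sub_zero, abs_of_nonneg (sub_nonneg.2 hab)] at h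
    exact ⟨h, by linarith⟩
  · rw [hdiv 1, arg_exp_mul_I_of_mem_Ioc ⟨by simp; linarith, by simp; linarith⟩,
      Nat.cast_one, one_mul, abs_of_neg (by linarith)] at h
    exact ⟨by linarith, by linarith⟩

open Fin.NatCast in
/-- The lift of angles `θ 0 ≤ ⋯ ≤ θ n` of points on the circle to a sequence on `ℕ` that
advances by `2π` every `n + 1` steps. -/
noncomputable def cyclicLift {n : ℕ} (θ : Fin (n + 1) → ℝ) (k : ℕ) : ℝ :=
  θ k + 2 * π * (k / (n + 1) : ℕ)

namespace cyclicLift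

open Fin.NatCast

variable {n : ℕ} (θ : Fin (n + 1) → ℝ)

lemma add_period (k : ℕ) : cyclicLift θ (k + (n + 1)) = cyclicLift θ k + 2 * π := by
  have hcast : ((k + (n + 1) : ℕ) : Fin (n + 1)) = k := by
    ext; simp only [Fin.val_natCast, Nat.add_mod_right]
  rw [cyclicLift, cyclicLift, hcast, Nat.add_div_right k n.succ_pos]
  push_cast; ring

lemma exp_mul_I (k : ℕ) : exp (cyclicLift θ k * I) = exp (θ k * I) := by
  have h : (cyclicLift θ k : ℂ) * I = θ k * I + (k / (n + 1) : ℕ) * (2 * π * I) := by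
    rw [cyclicLift]; push_cast; ring
  rw [h, Complex.exp_add, exp_nat_mul_two_pi_mul_I, mul_one]

lemma le_succ_sub {ε : ℝ} (hstep : ∀ j : Fin n, ε ≤ θ j.succ - θ j.castSucc)
    (hwrap : ε ≤ θ 0 + 2 * π - θ (Fin.last n)) (k : ℕ) :
    ε ≤ cyclicLift θ (k + 1) - cyclicLift θ k := by
  induction k using Nat.strong_induction_on with
  | _ k ih =>
  rcases lt_or_ge k (n + 1) with hkN | hkN
  · rcases (Nat.lt_succ_iff.1 hkN).lt_or_eq with hkn | rfl
    · have hsucc : ((k + 1 : ℕ) : Fin (n + 1)) = (⟨k, hkn⟩ : Fin n).succ := by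
        ext; rw [Fin.val_natCast, Nat.mod_eq_of_lt (by omega)]; rfl
      have hcast : ((k : ℕ) : Fin (n + 1)) = (⟨k, hkn⟩ : Fin n).castSucc := by
        ext; rw [Fin.val_natCast, Nat.mod_eq_of_lt hkN]; rfl
      simpa [cyclicLift, hsucc, hcast, Nat.div_eq_of_lt (by omega : k + 1 < n + 1),
        Nat.div_eq_of_lt hkN] using hstep ⟨k, hkn⟩
    · simpa [cyclicLift, Nat.div_eq_of_lt hkN] using hwrap
  · obtain ⟨j, rfl⟩ : ∃ j, k = j + (n + 1) := ⟨k - (n + 1), by omega⟩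
    rw [add_right_comm, add_period, add_period]
    linarith [ih j (by omega)]

end cyclicLift

lemma le_cyclicLift_arg_succ_sub {n : ℕ} {ε : ℝ} {w : Fin (n + 1) → ℂ} (hn : 0 < n)
    (hw : ∀ j, ‖w j‖ = 1) (hmono : Monotone (arg ∘ w))
    (hgap : ∀ j k, j ≠ k → ε ≤ |arg (w j / w k)|) (k : ℕ) :
    ε ≤ cyclicLift (arg ∘ w) (k + 1) - cyclicLift (arg ∘ w) k := by
  refine cyclicLift.le_succ_sub _ (fun j => ?_) ?_ k
  · exact (le_sub_arg_of_le_abs_arg_div (hw _) (hw _) (hmono (Fin.castSucc_lt_succ (i := j)).le)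
      (hgap _ _ (Fin.castSucc_lt_succ (i := j)).ne')).1
  · have hlast : Fin.last n ≠ 0 := fun h => by simp [Fin.ext_iff] at h; omega
    have := (le_sub_arg_of_le_abs_arg_div (hw _) (hw _) (hmono (Fin.zero_le _))
      (hgap _ _ hlast)).2
    simp only [Function.comp_apply]
    linarith

lemma norm_det_vandermonde_comp_perm {𝕜 : Type*} [NormedField 𝕜] {N : ℕ} (v : Fin N → 𝕜)
    (σ : Equiv.Perm (Fin N)) : ‖(vandermonde (v ∘ σ)).det‖ = ‖(vandermonde v).det‖ := by
  rw [show vandermonde (v ∘ σ) = (vandermonde v).submatrix σ id from rfl, det_permute, norm_mul]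
  rcases Int.units_eq_one_or (Equiv.Perm.sign σ) with hσ | hσ <;> simp [hσ]

lemma prod_prod_Ioi_mul_prod_prod_Ioi_flip {α M : Type*} [Fintype α] [LinearOrder α]
    [LocallyFiniteOrderTop α] [LocallyFiniteOrderBot α] [DecidableEq α] [CommMonoid M]
    (g : α → α → M) :
    (∏ i, ∏ j ∈ Ioi i, g i j) * ∏ i, ∏ j ∈ Ioi i, g j i = ∏ i, ∏ j ∈ univ.erase i, g i j := by
  rw [prod_comm' (f := fun i j => g j i) (t' := univ) (s' := Iio) (by simp),
    ← prod_mul_distrib]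
  refine prod_congr rfl fun i _ => ?_
  rw [← prod_union (disjoint_left.2 fun j hj hj' => by simp_all; exact lt_asymm hj hj')]
  congr 1; ext j; simp [ne_comm, lt_or_lt_iff_ne]

lemma norm_det_vandermonde_sq {𝕜 : Type*} [NormedField 𝕜] {N : ℕ} [NeZero N]
    (v : Fin N → 𝕜) :
    ‖(vandermonde v).det‖ ^ 2 = ∏ m ∈ univ.erase 0, ∏ i, ‖v (i + m) - v i‖ := by
  have hshift (i : Fin N) :
      ∏ j ∈ univ.erase i, ‖v j - v i‖ = ∏ m ∈ univ.erase 0, ‖v (i + m) - v i‖ :=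
    prod_nbij' (· - i) (i + ·) (by simp [sub_eq_zero]) (by simp) (by simp) (by simp) (by simp)
  rw [prod_comm, ← prod_congr rfl fun i _ => hshift i, ← prod_prod_Ioi_mul_prod_prod_Ioi_flip,
    sq, det_vandermonde, norm_prod]
  simp only [norm_prod, norm_sub_rev]

lemma pow_mul_pow_le_prod_abs_sin {n m : ℕ} {ε : ℝ} {φ : ℕ → ℝ} (hε : 0 < ε)
    (hper : ∀ k, φ (k + (n + 1)) = φ k + 2 * π) (hgap : ∀ k, ε ≤ φ (k + 1) - φ k)
    (hm0 : 0 < m) (hmN : m < n + 1) :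
    (2 * Real.sin (m * ε / 2)) ^ (n + 1 - m) * (2 * Real.sin ((n + 1 - m) * ε / 2)) ^ m
      ≤ ∏ i ∈ range (n + 1), 2 * |Real.sin ((φ (i + m) - φ i) / 2)| := by
  have hcast : ((n + 1 - m : ℕ) : ℝ) = n + 1 - m := by push_cast [Nat.cast_sub hmN.le]; ring
  have hmN' : (m : ℝ) + 1 ≤ n + 1 := by exact_mod_cast hmN
  set A : ℝ := m * ε / 2
  set B : ℝ := π - (n + 1 - m) * ε / 2
  set x : ℕ → ℝ := fun i => (φ (i + m) - φ i) / 2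
  have hA : 0 < A := by positivity
  have hB : B < π := by simp only [B]; nlinarith
  -- the chord `x i` is at least `m` gaps long, and the rest of the circle at least `n + 1 - m`
  have hx (i : ℕ) : x i ∈ Icc A B := by
    have hlow := mul_le_sub_of_le_succ_sub hgap i m
    have hup := mul_le_sub_of_le_succ_sub hgap (i + m) (n + 1 - m)
    rw [add_assoc, Nat.add_sub_cancel' hmN.le, hper, hcast] at hup
    constructor <;> simp only [x, A, B] <;> linarith
  have hsin_A : 0 < Real.sin A := sin_pos_of_pos_of_lt_pi hA (by linarith [(hx 0).1, (hx 0).2])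
  have hsin_B : 0 < Real.sin B := sin_pos_of_pos_of_lt_pi (by linarith [(hx 0).1, (hx 0).2]) hB
  have hconc : ConcaveOn ℝ (Icc A B) Real.sin :=
    strictConcaveOn_sin_Icc.concaveOn.subset (Icc_subset_Icc hA.le hB.le) (convex_Icc A B)
  have hsum : ∑ i ∈ range (n + 1), x i = (n + 1 - m : ℕ) * A + m * B := by
    rw [← sum_div, sum_range_sub_of_add_period hper, hcast]; simp only [A, B]; ring
  have h2 : (2 : ℝ) ^ (n + 1) = 2 ^ (n + 1 - m) * 2 ^ m := by
    rw [← pow_add, Nat.sub_add_cancel hmN.le]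
  calc (2 * Real.sin (m * ε / 2)) ^ (n + 1 - m) * (2 * Real.sin ((n + 1 - m) * ε / 2)) ^ m
      = 2 ^ (n + 1) * (Real.sin A ^ (n + 1 - m) * Real.sin B ^ m) := by
        rw [show Real.sin B = Real.sin ((n + 1 - m) * ε / 2) from sin_pi_sub _, h2]
        ring
    _ ≤ 2 ^ (n + 1) * ∏ i ∈ range (n + 1), Real.sin (x i) := by
        gcongr
        exact hconc.pow_mul_pow_le_prod hsin_A.le hsin_B.le (fun i _ => hx i)
          (by rw [card_range, Nat.sub_add_cancel hmN.le]) hsum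
    _ = ∏ i ∈ range (n + 1), 2 * |Real.sin (x i)| := by
        rw [prod_mul_distrib, prod_const, card_range]
        congr 1
        exact prod_congr rfl fun i _ => (abs_of_pos <|
          sin_pos_of_pos_of_lt_pi (hA.trans_le (hx i).1) ((hx i).2.trans_lt hB)).symm

open Fin.NatCast in
lemma prod_norm_sub_eq_prod_abs_sin {n : ℕ} {w : Fin (n + 1) → ℂ} (hw : ∀ j, ‖w j‖ = 1)
    (m : Fin (n + 1)) :
    ∏ i, ‖w (i + m) - w i‖ = ∏ i ∈ range (n + 1),
      2 * |Real.sin ((cyclicLift (arg ∘ w) (i + m) - cyclicLift (arg ∘ w) i) / 2)| := by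
  have hlift (k : ℕ) : w k = exp (cyclicLift (arg ∘ w) k * I) := by
    rw [cyclicLift.exp_mul_I, Function.comp_apply, exp_arg_mul_I_of_norm_eq_one (hw _)]
  rw [← Fin.prod_univ_eq_prod_range]
  refine prod_congr rfl fun i _ => ?_
  have hwi : w i = exp (cyclicLift (arg ∘ w) i * I) := by simpa using hlift i
  have hwim : w (i + m) = exp (cyclicLift (arg ∘ w) (i + m) * I) := by simpa using hlift (i + m)
  rw [hwi, hwim, norm_exp_mul_I_sub_exp_mul_I]

lemma prod_norm_exp_sub_exp_equispaced {n : ℕ} {ε : ℝ} (hε : 0 ≤ ε)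
    (hNε : (n + 1) * ε ≤ 2 * π) (m : Fin (n + 1)) :
    ∏ i : Fin (n + 1), ‖exp (((i + m : Fin (n + 1)) : ℕ) * ε * I) - exp ((i : ℕ) * ε * I)‖
      = (2 * Real.sin (m * ε / 2)) ^ (n + 1 - m : ℕ)
        * (2 * Real.sin ((n + 1 - m) * ε / 2)) ^ (m : ℕ) := by
  have hmN : (m : ℕ) ≤ n + 1 := m.2.le
  have hcast : ((n + 1 - m : ℕ) : ℝ) = n + 1 - m := by push_cast [Nat.cast_sub hmN]; ring
  have hnorm (a b : ℕ) :
      ‖exp (a * ε * I) - exp (b * ε * I)‖ = 2 * |Real.sin ((a - b : ℝ) * ε / 2)| := by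
    have h := norm_exp_mul_I_sub_exp_mul_I (a * ε) (b * ε)
    push_cast at h; rw [h]; ring_nf
  have hsin (t : ℕ) (ht : t ≤ n + 1) : 0 ≤ Real.sin (t * ε / 2) := by
    have : (t : ℝ) ≤ n + 1 := by exact_mod_cast ht
    exact sin_nonneg_of_nonneg_of_le_pi (by positivity) (by nlinarith)
  have hsplit := prod_range_add
    (fun i => ‖exp (((i + m) % (n + 1) : ℕ) * ε * I) - exp (i * ε * I)‖) (n + 1 - m) m
  rw [Nat.sub_add_cancel hmN] at hsplit
  simp only [Fin.val_add]
  rw [Fin.prod_univ_eq_prod_range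
    (fun i => ‖exp (((i + m) % (n + 1) : ℕ) * ε * I) - exp (i * ε * I)‖), hsplit]
  congr 1
  · rw [prod_eq_pow_card fun i hi => ?_, card_range]
    rw [Nat.mod_eq_of_lt (by simp at hi; omega), hnorm, Nat.cast_add, add_sub_cancel_left,
      abs_of_nonneg (hsin m hmN)]
  · rw [prod_eq_pow_card fun i hi => ?_, card_range]
    have : (n + 1 - m + i + m) % (n + 1) = i := by
      rw [add_right_comm, Nat.sub_add_cancel hmN, Nat.add_mod_left,
        Nat.mod_eq_of_lt (by simp at hi; omega)]
    rw [this, hnorm, Nat.cast_add, hcast,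
      show (i - (n + 1 - m + i) : ℝ) * ε / 2 = -((n + 1 - m) * ε / 2) by ring,
      Real.sin_neg, abs_neg, ← hcast, abs_of_nonneg (hsin _ (Nat.sub_le _ _))]

theorem stmt8_general (n : ℕ) (ε : ℝ) (hε : 0 < ε)
    (z : Fin (n + 1) → ℂ) (hz : ∀ j, ‖z j‖ = 1)
    (hgap : ∀ j k, j ≠ k → ε ≤ |Complex.arg (z j / z k)|) :
    ‖(Matrix.of fun j k : Fin (n + 1) =>
        Complex.exp ((k : ℕ) * ε * Complex.I) ^ (j : ℕ)).det‖
      ≤ ‖(Matrix.of fun j k : Fin (n + 1) => z k ^ (j : ℕ)).det‖ := by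
  set σ := Tuple.sort fun j => arg (z j)
  set w := z ∘ σ
  have hw (j) : ‖w j‖ = 1 := hz _
  have hwgap (j k) (hjk : j ≠ k) : ε ≤ |arg (w j / w k)| := hgap _ _ (σ.injective.ne hjk)
  have hmono : Monotone (arg ∘ w) := Tuple.monotone_sort fun j => arg (z j)
  change ‖(vandermonde _)ᵀ.det‖ ≤ ‖(vandermonde z)ᵀ.det‖
  rw [det_transpose, det_transpose, ← norm_det_vandermonde_comp_perm z σ,
    ← sq_le_sq₀ (norm_nonneg _) (norm_nonneg _), norm_det_vandermonde_sq, norm_det_vandermonde_sq]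
  refine prod_le_prod (fun _ _ => by positivity) fun m hm => ?_
  have hm0 : 0 < (m : ℕ) := Fin.pos_iff_ne_zero.2 (ne_of_mem_erase hm)
  have hper := cyclicLift.add_period (arg ∘ w)
  have hstep := le_cyclicLift_arg_succ_sub (by omega) hw hmono hwgap
  have hNε := mul_le_of_le_succ_sub_of_add_period hstep hper
  push_cast at hNε
  rw [prod_norm_exp_sub_exp_equispaced hε.le hNε, prod_norm_sub_eq_prod_abs_sin hw]
  exact pow_mul_pow_le_prod_abs_sin hε hper hstep hm0 m.2

/-- If `z 0, ..., z n` are points on the unit circle with pairwise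
arc-length distance at least `ε` and `(n+1)ε ≤ 2π`, then the modulus of the
Vandermonde determinant is at least that of the equispaced nodes `e^{ijε}`. -/
theorem stmt8 (n : ℕ) (ε : ℝ) (hε : 0 < ε) (hNε : (n + 1 : ℝ) * ε ≤ 2 * π)
    (z : Fin (n + 1) → ℂ) (hz : ∀ j, ‖z j‖ = 1)
    (hgap : ∀ j k, j ≠ k → ε ≤ |Complex.arg (z j / z k)|) :
    ‖(Matrix.of fun j k : Fin (n + 1) =>
        Complex.exp ((k : ℕ) * ε * Complex.I) ^ (j : ℕ)).det‖
      ≤ ‖(Matrix.of fun j k : Fin (n + 1) => z k ^ (j : ℕ)).det‖ :=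
  stmt8_general n ε hε z hz hgap
end

section
/- For all real x with 0 < x ≤ π/2, one has 1/x − 2/π ≤ cot x ≤ 1/x. -/
/-! The upper bound is `x cos x ≤ sin x`, i.e. `x ≤ tan x` below `π/2`. For the lower bound,
`cot x - 1/x` has derivative `1/x² - 1/sin² x ≤ 0` on `(0, π)` since `sin x ≤ x`, so it is
decreasing there and is at least its value `-2/π` at `π/2`. -/

open Real Set

theorem Real.hasDerivAt_cot {x : ℝ} (hx : sin x ≠ 0) : HasDerivAt cot (-1 / sin x ^ 2) x := by
  have hcot : cot = fun t => cos t / sin t := funext cot_eq_cos_div_sin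
  rw [hcot]
  refine ((hasDerivAt_cos x).div (hasDerivAt_sin x) hx).congr_deriv ?_
  rw [← sin_sq_add_cos_sq x]
  ring

theorem Real.mul_cos_le_sin {x : ℝ} (hx₀ : 0 ≤ x) (hx : x ≤ π) : x * cos x ≤ sin x := by
  rcases lt_or_ge x (π / 2) with hx' | hx'
  · have hcos : 0 < cos x := cos_pos_of_mem_Ioo ⟨by linarith [pi_pos], hx'⟩
    have htan := le_tan hx₀ hx'
    rwa [tan_eq_sin_div_cos, le_div_iff₀ hcos] at htan
  · have hcos : cos x ≤ 0 := cos_nonpos_of_pi_div_two_le_of_le hx' (by linarith)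
    nlinarith [sin_nonneg_of_nonneg_of_le_pi hx₀ hx]

theorem Real.cot_le_inv {x : ℝ} (hx₀ : 0 < x) (hx : x < π) : cot x ≤ x⁻¹ := by
  have hsin : 0 < sin x := sin_pos_of_pos_of_lt_pi hx₀ hx
  rw [cot_eq_cos_div_sin, div_le_iff₀ hsin, inv_mul_eq_div, le_div_iff₀ hx₀, mul_comm]
  exact mul_cos_le_sin hx₀.le hx.le

theorem Real.antitoneOn_cot_sub_inv : AntitoneOn (fun x => cot x - x⁻¹) (Ioo 0 π) := by
  have hsin : ∀ x ∈ Ioo 0 π, 0 < sin x := fun x hx => sin_pos_of_pos_of_lt_pi hx.1 hx.2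
  have hderiv : ∀ x ∈ Ioo 0 π,
      HasDerivAt (fun x => cot x - x⁻¹) (-1 / sin x ^ 2 - -(x ^ 2)⁻¹) x := fun x hx =>
    (hasDerivAt_cot (hsin x hx).ne').sub (hasDerivAt_inv hx.1.ne')
  refine antitoneOn_of_hasDerivWithinAt_nonpos (convex_Ioo 0 π)
    (fun x hx => (hderiv x hx).continuousAt.continuousWithinAt)
    (fun x hx => (hderiv x (interior_subset hx)).hasDerivWithinAt) fun x hx => ?_
  rw [interior_Ioo] at hx
  have hsin_le : sin x ^ 2 ≤ x ^ 2 := pow_le_pow_left₀ (hsin x hx).le (sin_le hx.1.le) 2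
  have : (x ^ 2)⁻¹ ≤ (sin x ^ 2)⁻¹ := inv_anti₀ (pow_pos (hsin x hx) 2) hsin_le
  rw [neg_div, one_div]
  linarith

theorem Real.inv_sub_two_div_pi_le_cot {x : ℝ} (hx₀ : 0 < x) (hx : x ≤ π / 2) :
    x⁻¹ - 2 / π ≤ cot x := by
  have hpi := pi_pos
  have hmono := antitoneOn_cot_sub_inv ⟨hx₀, by linarith⟩ ⟨by linarith, by linarith⟩ hx
  beta_reduce at hmono
  rw [cot_eq_cos_div_sin (π / 2), cos_pi_div_two, zero_div, inv_div] at hmono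
  linarith

/-- For `0 < x ≤ π/2`, `1/x − 2/π ≤ cot x ≤ 1/x`. -/
theorem stmt16 (x : ℝ) (hx0 : 0 < x) (hx : x ≤ π / 2) :
    1 / x - 2 / π ≤ Real.cot x ∧ Real.cot x ≤ 1 / x := by
  rw [one_div]
  exact ⟨inv_sub_two_div_pi_le_cot hx0 hx, cot_le_inv hx0 (by linarith [pi_pos])⟩
end

section
/- For all real x in (0,1), (2/π)·x/(1−x) ≤ tan(πx/2) ≤ (π/2)·x/(1−x). -/
open Real

/-!
Jordan's inequality `x ≤ sin (π x / 2) ≤ π x / 2` on `[0, 1]`, applied at `x` and at `1 - x`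
(where `sin (π (1 - x) / 2) = cos (π x / 2)`), sandwiches the numerator of
`tan (π x / 2) = sin (π x / 2) / cos (π x / 2)` between `x` and `π x / 2`, and its denominator
between `1 - x` and `π (1 - x) / 2`.
-/

namespace Real

variable {x : ℝ}

lemma cos_pi_div_two_mul_eq_sin (x : ℝ) : cos (π / 2 * x) = sin (π / 2 * (1 - x)) := by
  rw [mul_one_sub, sin_pi_div_two_sub]

lemma one_sub_le_cos_pi_div_two_mul (hx₀ : 0 ≤ x) (hx₁ : x ≤ 1) :
    1 - x ≤ cos (π / 2 * x) :=
  cos_pi_div_two_mul_eq_sin x ▸ le_sin_mul (by linarith) (by linarith)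

lemma cos_pi_div_two_mul_le (hx₁ : x ≤ 1) : cos (π / 2 * x) ≤ π / 2 * (1 - x) :=
  cos_pi_div_two_mul_eq_sin x ▸ sin_le (by have := pi_pos; nlinarith)

lemma two_div_pi_mul_div_one_sub_le_tan (hx₀ : 0 ≤ x) (hx₁ : x < 1) :
    2 / π * (x / (1 - x)) ≤ tan (π / 2 * x) := by
  calc 2 / π * (x / (1 - x)) = x / (π / 2 * (1 - x)) := by field_simp
    _ ≤ sin (π / 2 * x) / cos (π / 2 * x) :=
        div_le_div₀ (by linarith [le_sin_mul hx₀ hx₁.le]) (le_sin_mul hx₀ hx₁.le)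
          (by linarith [one_sub_le_cos_pi_div_two_mul hx₀ hx₁.le])
          (cos_pi_div_two_mul_le hx₁.le)
    _ = tan (π / 2 * x) := (tan_eq_sin_div_cos _).symm

lemma tan_le_pi_div_two_mul_div_one_sub (hx₀ : 0 ≤ x) (hx₁ : x < 1) :
    tan (π / 2 * x) ≤ π / 2 * (x / (1 - x)) := by
  calc tan (π / 2 * x) = sin (π / 2 * x) / cos (π / 2 * x) := tan_eq_sin_div_cos _
    _ ≤ π / 2 * x / (1 - x) :=
        div_le_div₀ (by positivity) (sin_le (by positivity)) (by linarith)
          (one_sub_le_cos_pi_div_two_mul hx₀ hx₁.le)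
    _ = π / 2 * (x / (1 - x)) := mul_div_assoc _ _ _

end Real

/-- For `x ∈ (0,1)`, `(2/π)·x/(1−x) ≤ tan(πx/2) ≤ (π/2)·x/(1−x)`. -/
theorem stmt17 (x : ℝ) (hx : x ∈ Set.Ioo (0:ℝ) 1) :
    (2 / π) * (x / (1 - x)) ≤ Real.tan (π * x / 2) ∧
    Real.tan (π * x / 2) ≤ (π / 2) * (x / (1 - x)) := by
  obtain ⟨hx₀, hx₁⟩ := hx
  rw [mul_div_right_comm]
  exact ⟨two_div_pi_mul_div_one_sub_le_tan hx₀.le hx₁,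
    tan_le_pi_div_two_mul_div_one_sub hx₀.le hx₁⟩
end
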